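/- Let X ⊂ ℝ^d be a compact convex set, let h : X → ℝ be L-smooth, let x ∈ X and r > 0, and let z ∼ Z(x,r). Then E[ ‖ G_h(x;r,z) − ⟨∇h(x), z⟩·z ‖² ] ≤ r²·L²·(d+6)³/4. -/

import Mathlib

/-!
For `z ∈ S(x,r)` the point `x + r z` lies in `X`, so the quadratic bound
`|h(x + r z) - h(x) - r⟪∇h(x), z⟫| ≤ (L/2) r² ‖z‖²` (integrate the Lipschitz gradient along the
segment) bounds the integrand at `z` by `(r² L² / 4) ‖z‖⁶`. The projection onto the compact convex
set `S(x,r) ∋ 0` is 1-Lipschitz and fixes `0`, so it does not increase norms, and the expectation is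
at most `(r² L² / 4) E‖z̄‖⁶ = (r² L² / 4) d (d + 2) (d + 4) ≤ r² L² (d + 6)³ / 4`. The sixth moment
follows by peeling off one coordinate at a time, using `E y^(2j) = (2j - 1)‼` for `y ∼ N(0, 1)`.
-/

open MeasureTheory ProbabilityTheory Real Set Filter Pointwise
open scoped Classical ENNReal RealInnerProductSpace

noncomputable section

variable {d : ℕ}

/-- Euclidean metric projection onto a set: a nearest point of `C`, if one exists. -/
noncomputable def metricProj (C : Set (EuclideanSpace ℝ (Fin d)))
    (x : EuclideanSpace ℝ (Fin d)) : EuclideanSpace ℝ (Fin d) :=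
  if h : ∃ y, y ∈ C ∧ ∀ c ∈ C, dist x y ≤ dist x c then h.choose else x

/-- The standard Gaussian measure `N(0, I_d)` on `ℝ^d`. -/
noncomputable def stdGaussian (d : ℕ) : Measure (EuclideanSpace ℝ (Fin d)) :=
  (Measure.pi fun _ : Fin d => gaussianReal 0 1).map
    (MeasurableEquiv.toLp 2 (Fin d → ℝ))

/-- The uniform distribution on the sphere of radius `√d` in `ℝ^d`,
realized as the pushforward of the standard Gaussian under radial normalization. -/
noncomputable def uniformSphere (d : ℕ) : Measure (EuclideanSpace ℝ (Fin d)) :=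
  (stdGaussian d).map (fun z => (Real.sqrt d / ‖z‖) • z)

/-- The set `S(x,r) = {(s - x)/r : s ∈ X}`. -/
def sShift (X : Set (EuclideanSpace ℝ (Fin d))) (x : EuclideanSpace ℝ (Fin d)) (r : ℝ) :
    Set (EuclideanSpace ℝ (Fin d)) :=
  (fun s => r⁻¹ • (s - x)) '' X

/-- The law `Z(x,r)` of the Gaussian perturbation projected onto `S(x,r)`. -/
noncomputable def zDist (X : Set (EuclideanSpace ℝ (Fin d))) (x : EuclideanSpace ℝ (Fin d))
    (r : ℝ) : Measure (EuclideanSpace ℝ (Fin d)) :=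
  (stdGaussian d).map (metricProj (sShift X x r))

/-- `h` is `Λ`-Lipschitz on `X`. -/
def LipOn (h : EuclideanSpace ℝ (Fin d) → ℝ) (Λ : ℝ)
    (X : Set (EuclideanSpace ℝ (Fin d))) : Prop :=
  ∀ x ∈ X, ∀ y ∈ X, |h x - h y| ≤ Λ * ‖x - y‖

/-- `h` is `L`-smooth on `X`: differentiable with `L`-Lipschitz gradient on `X`. -/
def IsSmoothOn (h : EuclideanSpace ℝ (Fin d) → ℝ) (L : ℝ)
    (X : Set (EuclideanSpace ℝ (Fin d))) : Prop :=
  Differentiable ℝ h ∧ ∀ x ∈ X, ∀ y ∈ X, ‖gradient h x - gradient h y‖ ≤ L * ‖x - y‖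

/-- The gradient mapping `𝔤(x; M) = M (x - P_X[x - (1/M) ∇F(x)])`. -/
noncomputable def gradMap (X : Set (EuclideanSpace ℝ (Fin d)))
    (F : EuclideanSpace ℝ (Fin d) → ℝ) (M : ℝ) (x : EuclideanSpace ℝ (Fin d)) :
    EuclideanSpace ℝ (Fin d) :=
  M • (x - metricProj X (x - (1 / M) • gradient F x))

/-- The 2-ZFGD iterates, given a realization `zbar` of the Gaussian samples. -/
noncomputable def zfgd (X : Set (EuclideanSpace ℝ (Fin d))) (δ η : ℝ) (r : ℕ → ℝ)
    (f φ : EuclideanSpace ℝ (Fin d) → ℝ) (zbar : ℕ → EuclideanSpace ℝ (Fin d))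
    (x0 : EuclideanSpace ℝ (Fin d)) : ℕ → EuclideanSpace ℝ (Fin d)
  | 0 => x0
  | k + 1 =>
    let x := zfgd X δ η r f φ zbar x0 k
    let z := metricProj (sShift X x (r k)) (zbar k)
    metricProj ((1 - δ) • X)
      (x - η • (gradient f x + ((φ (x + r k • z) - φ x) / r k) • z))

/-- The box `Π_β [l β, u β] ⊆ ℝ^d`. -/
def box (l u : Fin d → ℝ) : Set (EuclideanSpace ℝ (Fin d)) :=
  {x | ∀ β, x β ∈ Set.Icc (l β) (u β)}

/-- `h` is `(L 1, …, L d)`-coordinatewise smooth on `X`. -/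
def CoordSmoothOn (h : EuclideanSpace ℝ (Fin d) → ℝ) (L : Fin d → ℝ)
    (X : Set (EuclideanSpace ℝ (Fin d))) : Prop :=
  Differentiable ℝ h ∧ ∀ (β : Fin d), ∀ x ∈ X, ∀ t : ℝ,
    x + t • EuclideanSpace.single β 1 ∈ X →
    |gradient h (x + t • EuclideanSpace.single β 1) β - gradient h x β| ≤ L β * |t|

/-- Joint law of a pair: uniform coordinate on `Fin d` and uniform sign on `{-1, 1}`. -/
noncomputable def unifPair (d : ℕ) : Measure (Fin d × ℝ) :=
  (((d : ℝ≥0∞)⁻¹ • Measure.count : Measure (Fin d))).prod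
    (((2 : ℝ≥0∞)⁻¹ • (Measure.dirac (-1) + Measure.dirac 1) : Measure ℝ))

/-- The RZFCD iterates, given realizations `a` of the coordinate draws and `s` of the
sign draws. -/
noncomputable def rzfcd (l u η : Fin d → ℝ) (r : Fin d → ℕ → ℝ)
    (f φ : EuclideanSpace ℝ (Fin d) → ℝ)
    (a : ℕ → Fin d) (s : ℕ → ℝ) (x0 : EuclideanSpace ℝ (Fin d)) :
    ℕ → EuclideanSpace ℝ (Fin d)
  | 0 => x0
  | k + 1 =>
    let x := rzfcd l u η r f φ a s x0 k
    let β := a k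
    let z : ℝ := if u β < x β + r β k then -1 else if x β - r β k < l β then 1 else s k
    let g : ℝ := gradient f x β +
      ((φ (x + (r β k * z) • EuclideanSpace.single β 1) - φ x) / r β k) * z
    WithLp.toLp 2 (Function.update x.ofLp β (max (l β) (min (u β) (x β - η β * g))))

section GaussianMoments

open scoped Nat

local notation "γ" => gaussianReal 0 1

theorem integral_pow_two_mul_gaussianReal (k : ℕ) :
    ∫ x, x ^ (2 * k) ∂γ = (2 * k - 1 : ℕ)‼ := by
  have hIoi : ∫ x in Ioi (0 : ℝ), x ^ (2 * k) * rexp (-x ^ 2 / 2)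
      = (√(1 / 2))⁻¹ * ((1 / 2) ^ k)⁻¹ * (1 / 2) * Gamma (k + 1 / 2) := by
    have h := integral_rpow_mul_exp_neg_mul_rpow (p := 2) (q := 2 * k) (b := 1 / 2)
      two_pos (by linarith [(Nat.cast_nonneg k : (0 : ℝ) ≤ k)]) one_half_pos
    rw [show -(2 * (k : ℝ) + 1) / 2 = -(1 / 2) + -k by ring,
      rpow_add one_half_pos, rpow_neg one_half_pos.le, rpow_neg one_half_pos.le,
      ← sqrt_eq_rpow, rpow_natCast, show (2 * (k : ℝ) + 1) / 2 = k + 1 / 2 by ring] at h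
    rw [← h]
    refine setIntegral_congr_fun measurableSet_Ioi fun x _ => ?_
    rw [← Nat.cast_ofNat (R := ℝ) (n := 2), rpow_natCast, ← Nat.cast_mul, rpow_natCast]
    ring_nf
  have hpdf (x : ℝ) : gaussianPDFReal 0 1 x • x ^ (2 * k)
      = (√(2 * π))⁻¹ * (|x| ^ (2 * k) * rexp (-|x| ^ 2 / 2)) := by
    rw [gaussianPDFReal, pow_mul, pow_mul, sq_abs, smul_eq_mul]
    simp only [NNReal.coe_one, mul_one, sub_zero]
    ring
  rw [integral_gaussianReal_eq_integral_smul one_ne_zero]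
  simp_rw [hpdf]
  rw [integral_const_mul, integral_comp_abs (f := fun y => y ^ (2 * k) * rexp (-y ^ 2 / 2)), hIoi,
    Gamma_nat_add_half, sqrt_mul two_pos.le, one_div, sqrt_inv]
  field_simp
  rw [← mul_pow]
  norm_num

theorem integral_prod_add_pow {α β : Type*} [MeasurableSpace α] [MeasurableSpace β]
    {μ : Measure α} {ν : Measure β} [SFinite μ] [SFinite ν] {f : α → ℝ} {g : β → ℝ} {n : ℕ}
    (hf : ∀ k ≤ n, Integrable (fun a => f a ^ k) μ) (hg : ∀ k ≤ n, Integrable (fun b => g b ^ k) ν) :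
    ∫ p, (f p.1 + g p.2) ^ n ∂μ.prod ν
      = ∑ k ∈ Finset.range (n + 1), (∫ a, f a ^ k ∂μ) * (∫ b, g b ^ (n - k) ∂ν) * n.choose k := by
  simp_rw [add_pow]
  rw [integral_finsetSum]
  · refine Finset.sum_congr rfl fun k _ => ?_
    rw [integral_mul_const, integral_prod_mul (fun a => f a ^ k) (fun b => g b ^ (n - k))]
  · intro k hk
    have hkn : k ≤ n := Finset.mem_range_succ_iff.1 hk
    exact ((hf k hkn).mul_prod (hg (n - k) (Nat.sub_le n k))).mul_const _

theorem stdGaussian_eq_stdGaussian_euclideanSpace (d : ℕ) :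
    stdGaussian d = ProbabilityTheory.stdGaussian (EuclideanSpace ℝ (Fin d)) :=
  map_pi_eq_stdGaussian

theorem integrable_norm_pow_stdGaussian (d k : ℕ) :
    Integrable (fun z => ‖z‖ ^ k) (stdGaussian d) := by
  rw [stdGaussian_eq_stdGaussian_euclideanSpace]
  exact (IsGaussian.memLp_id _ k (ENNReal.natCast_ne_top k)).integrable_norm_pow'

theorem norm_toLp_pow_two_mul {n : ℕ} (y : Fin n → ℝ) (k : ℕ) :
    ‖WithLp.toLp 2 y‖ ^ (2 * k) = (∑ i, y i ^ 2) ^ k := by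
  rw [pow_mul, EuclideanSpace.real_norm_sq_eq]

theorem integrable_sum_sq_pow (n k : ℕ) :
    Integrable (fun y : Fin n → ℝ => (∑ i, y i ^ 2) ^ k) (Measure.pi fun _ => γ) := by
  have h := integrable_norm_pow_stdGaussian n (2 * k)
  rw [_root_.stdGaussian, integrable_map_equiv] at h
  simpa only [Function.comp_def, MeasurableEquiv.coe_toLp, norm_toLp_pow_two_mul] using h

theorem integral_sum_sq_pow_succ (n k : ℕ) :
    ∫ y : Fin (n + 1) → ℝ, (∑ i, y i ^ 2) ^ k ∂Measure.pi (fun _ => γ)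
      = ∑ j ∈ Finset.range (k + 1), ((2 * j - 1 : ℕ)‼ : ℝ)
          * (∫ y : Fin n → ℝ, (∑ i, y i ^ 2) ^ (k - j) ∂Measure.pi (fun _ => γ)) * k.choose j := by
  rw [← ((measurePreserving_piFinSuccAbove (fun _ => γ) 0).symm).integral_comp']
  have hcons (p : ℝ × (Fin n → ℝ)) :
      ∑ i, ((MeasurableEquiv.piFinSuccAbove (fun _ => ℝ) 0).symm p i) ^ 2
        = p.1 ^ 2 + ∑ i, p.2 i ^ 2 := by
    simp [Fin.sum_univ_succ, MeasurableEquiv.piFinSuccAbove_symm_apply, Fin.insertNthEquiv]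
  simp_rw [hcons]
  have hsq (j : ℕ) : Integrable (fun a : ℝ => (a ^ 2) ^ j) γ := by
    simpa [← pow_mul, pow_abs, abs_pow, (even_two_mul j).pow_abs] using
      (memLp_id_gaussianReal (μ := 0) (v := 1) (2 * j : ℕ)).integrable_norm_pow'
  rw [integral_prod_add_pow (f := fun a => a ^ 2) (fun j _ => hsq j)
    (fun j _ => integrable_sum_sq_pow n j)]
  refine Finset.sum_congr rfl fun j _ => ?_
  simp_rw [← pow_mul, integral_pow_two_mul_gaussianReal]

theorem integral_sum_sq_pow_of_le_three (n : ℕ) {k : ℕ} (hk : k ≤ 3) :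
    ∫ y : Fin n → ℝ, (∑ i, y i ^ 2) ^ k ∂Measure.pi (fun _ => γ)
      = ∏ j ∈ Finset.range k, ((n : ℝ) + 2 * j) := by
  induction n generalizing k with
  | zero => interval_cases k <;> simp [Finset.prod_range_succ]
  | succ n ih =>
    have h1 := ih (k := 1) (by norm_num)
    simp only [pow_one] at h1
    have h2 := ih (k := 2) (by norm_num)
    have h3 := ih (k := 3) (by norm_num)
    rw [integral_sum_sq_pow_succ]
    interval_cases k <;> simp [Finset.sum_range_succ, Finset.prod_range_succ, h1, h2, h3] <;> ring

theorem integral_norm_pow_six_stdGaussian (d : ℕ) :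
    ∫ z, ‖z‖ ^ 6 ∂stdGaussian d = d * (d + 2) * (d + 4) := by
  rw [_root_.stdGaussian, integral_map_equiv]
  simp only [MeasurableEquiv.coe_toLp, show 6 = 2 * 3 from rfl, norm_toLp_pow_two_mul]
  rw [integral_sum_sq_pow_of_le_three d le_rfl]
  simp only [Finset.prod_range_succ, Finset.prod_range_zero]
  push_cast
  ring

end GaussianMoments

section MetricProj

variable {C : Set (EuclideanSpace ℝ (Fin d))}

theorem metricProj_mem_and_dist_le (hne : C.Nonempty) (hc : IsCompact C)
    (z : EuclideanSpace ℝ (Fin d)) :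
    metricProj C z ∈ C ∧ ∀ c ∈ C, dist z (metricProj C z) ≤ dist z c := by
  obtain ⟨y, hy, hmin⟩ := hc.exists_isMinOn hne (continuous_const.dist continuous_id).continuousOn
  have hex : ∃ y ∈ C, ∀ c ∈ C, dist z y ≤ dist z c := ⟨y, hy, fun c hc => hmin hc⟩
  rw [metricProj, dif_pos hex]
  exact hex.choose_spec

theorem metricProj_of_mem (hc : IsCompact C) {z : EuclideanSpace ℝ (Fin d)} (hz : z ∈ C) :
    metricProj C z = z := by
  have h := (metricProj_mem_and_dist_le ⟨z, hz⟩ hc z).2 z hz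
  rw [dist_self] at h
  exact (dist_le_zero.1 h).symm

theorem inner_sub_metricProj_nonpos (hc : IsCompact C) (hconv : Convex ℝ C)
    (z : EuclideanSpace ℝ (Fin d)) {w : EuclideanSpace ℝ (Fin d)} (hw : w ∈ C) :
    ⟪z - metricProj C z, w - metricProj C z⟫ ≤ 0 := by
  obtain ⟨hmem, hmin⟩ := metricProj_mem_and_dist_le ⟨w, hw⟩ hc z
  have : Nonempty C := ⟨⟨w, hw⟩⟩
  refine (norm_eq_iInf_iff_real_inner_le_zero hconv hmem).1 (le_antisymm ?_ ?_) w hw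
  · exact le_ciInf fun c => by simpa only [dist_eq_norm] using hmin c c.2
  · have hbdd : BddBelow (Set.range fun c : C => ‖z - c‖) :=
      ⟨0, by rintro _ ⟨c, rfl⟩; exact norm_nonneg _⟩
    exact ciInf_le hbdd ⟨metricProj C z, hmem⟩

theorem lipschitzWith_one_metricProj (hne : C.Nonempty) (hc : IsCompact C)
    (hconv : Convex ℝ C) : LipschitzWith 1 (metricProj C) := by
  refine LipschitzWith.of_dist_le_mul fun z w => ?_
  set p := metricProj C z
  set q := metricProj C w
  have hz : ⟪z - p, q - p⟫ ≤ 0 :=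
    inner_sub_metricProj_nonpos hc hconv z (metricProj_mem_and_dist_le hne hc w).1
  have hw : ⟪w - q, p - q⟫ ≤ 0 :=
    inner_sub_metricProj_nonpos hc hconv w (metricProj_mem_and_dist_le hne hc z).1
  have key : ‖p - q‖ ^ 2 ≤ ⟪z - w, p - q⟫ := by
    have e : ⟪z - w, p - q⟫ = ‖p - q‖ ^ 2 - ⟪z - p, q - p⟫ - ⟪w - q, p - q⟫ := by
      rw [← real_inner_self_eq_norm_sq]
      simp only [inner_sub_left, inner_sub_right, real_inner_comm]
      ring
    linarith
  rw [dist_eq_norm, dist_eq_norm, NNReal.coe_one, one_mul]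
  nlinarith [real_inner_le_norm (z - w) (p - q), norm_nonneg (p - q), norm_nonneg (z - w)]

theorem norm_metricProj_le (h0 : (0 : EuclideanSpace ℝ (Fin d)) ∈ C) (hc : IsCompact C)
    (hconv : Convex ℝ C) (z : EuclideanSpace ℝ (Fin d)) : ‖metricProj C z‖ ≤ ‖z‖ := by
  simpa [metricProj_of_mem hc h0] using
    (lipschitzWith_one_metricProj ⟨0, h0⟩ hc hconv).dist_le_mul z 0

end MetricProj

theorem abs_sub_sub_inner_gradient_le {F : Type*} [NormedAddCommGroup F] [InnerProductSpace ℝ F]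
    [CompleteSpace F] {h : F → ℝ} {x s : F} {L : ℝ}
    (hd : ∀ y ∈ segment ℝ x s, DifferentiableAt ℝ h y)
    (hL : ∀ y ∈ segment ℝ x s, ‖gradient h y - gradient h x‖ ≤ L * ‖y - x‖) :
    |h s - h x - ⟪gradient h x, s - x⟫| ≤ L / 2 * ‖s - x‖ ^ 2 := by
  set v := s - x
  have hseg (t : ℝ) (ht : t ∈ Icc (0 : ℝ) 1) : x + t • v ∈ segment ℝ x s := by
    rw [segment_eq_image']
    exact ⟨t, ht, rfl⟩
  set φ : ℝ → ℝ := fun t => h (x + t • v) - h x - t * ⟪gradient h x, v⟫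
  have hφ (t : ℝ) (ht : t ∈ Icc (0 : ℝ) 1) :
      HasDerivAt φ ⟪gradient h (x + t • v) - gradient h x, v⟫ t := by
    have hline : HasDerivAt (fun t : ℝ => x + t • v) v t := by
      simpa using ((hasDerivAt_id t).smul_const v).const_add x
    have := (((hd _ (hseg t ht)).hasGradientAt.hasFDerivAt.comp_hasDerivAt t hline).sub_const
      (h x)).sub ((hasDerivAt_id t).mul_const ⟪gradient h x, v⟫)
    refine this.congr_deriv ?_
    simp [inner_sub_left]
  have hB (t : ℝ) : HasDerivAt (fun t : ℝ => L / 2 * ‖v‖ ^ 2 * t ^ 2) (L * ‖v‖ ^ 2 * t) t := by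
    refine ((hasDerivAt_pow 2 t).const_mul (L / 2 * ‖v‖ ^ 2)).congr_deriv ?_
    norm_num
    ring
  have hbound (t : ℝ) (ht : t ∈ Ico (0 : ℝ) 1) :
      ‖⟪gradient h (x + t • v) - gradient h x, v⟫‖ ≤ L * ‖v‖ ^ 2 * t := by
    have hgrad := hL _ (hseg t (Ico_subset_Icc_self ht))
    rw [add_sub_cancel_left, norm_smul, Real.norm_of_nonneg ht.1] at hgrad
    calc ‖⟪gradient h (x + t • v) - gradient h x, v⟫‖
        ≤ ‖gradient h (x + t • v) - gradient h x‖ * ‖v‖ := norm_inner_le_norm _ _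
      _ ≤ L * (t * ‖v‖) * ‖v‖ := by gcongr
      _ = L * ‖v‖ ^ 2 * t := by ring
  have := image_norm_le_of_norm_deriv_right_le_deriv_boundary
    (fun t ht => (hφ t ht).continuousAt.continuousWithinAt)
    (fun t ht => (hφ t (Ico_subset_Icc_self ht)).hasDerivWithinAt) (by simp [φ]) hB hbound
    (right_mem_Icc.2 zero_le_one)
  simpa [φ, v] using this

section SShift

variable {X : Set (EuclideanSpace ℝ (Fin d))} {x : EuclideanSpace ℝ (Fin d)} {r : ℝ}

theorem sShift_eq_preimage (hr : r ≠ 0) : sShift X x r = (fun z => x + r • z) ⁻¹' X := by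
  ext z
  constructor
  · rintro ⟨s, hs, rfl⟩
    simpa [smul_smul, hr] using hs
  · intro hz
    exact ⟨x + r • z, hz, by simp [smul_smul, hr]⟩

theorem zero_mem_sShift (hx : x ∈ X) : (0 : EuclideanSpace ℝ (Fin d)) ∈ sShift X x r :=
  ⟨x, hx, by simp⟩

theorem IsCompact.sShift (hX : IsCompact X) : IsCompact (sShift X x r) :=
  hX.image (by fun_prop)

theorem Convex.sShift (hX : Convex ℝ X) (hr : r ≠ 0) : Convex ℝ (sShift X x r) := by
  rw [sShift_eq_preimage hr]
  exact (hX.translate_preimage_right x).smul_preimage r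

end SShift

theorem sq_norm_twoPoint_sub_inner_smul_le {F : Type*} [NormedAddCommGroup F]
    [InnerProductSpace ℝ F] [CompleteSpace F] {h : F → ℝ} {x z : F} {r L : ℝ} (hr : r ≠ 0)
    (hd : ∀ y ∈ segment ℝ x (x + r • z), DifferentiableAt ℝ h y)
    (hL : ∀ y ∈ segment ℝ x (x + r • z), ‖gradient h y - gradient h x‖ ≤ L * ‖y - x‖) :
    ‖((h (x + r • z) - h x) / r) • z - ⟪gradient h x, z⟫ • z‖ ^ 2
      ≤ r ^ 2 * L ^ 2 / 4 * ‖z‖ ^ 6 := by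
  have hT := abs_sub_sub_inner_gradient_le hd hL
  rw [add_sub_cancel_left, inner_smul_right, norm_smul, Real.norm_eq_abs] at hT
  have hG : ((h (x + r • z) - h x) / r) • z - ⟪gradient h x, z⟫ • z
      = ((h (x + r • z) - h x - r * ⟪gradient h x, z⟫) / r) • z := by
    rw [← sub_smul]
    congr 1
    field_simp
  rw [hG, norm_smul, mul_pow, Real.norm_eq_abs, abs_div, div_pow]
  set q := h (x + r • z) - h x - r * ⟪gradient h x, z⟫
  calc |q| ^ 2 / |r| ^ 2 * ‖z‖ ^ 2 ≤ (L / 2 * (|r| * ‖z‖) ^ 2) ^ 2 / |r| ^ 2 * ‖z‖ ^ 2 := by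
        gcongr
    _ = r ^ 2 * L ^ 2 / 4 * ‖z‖ ^ 6 := by
        field_simp
        rw [sq_abs]
        ring

/-- Lemma 11 (quadratic-error term of the projected-Gaussian two-point estimator). -/
theorem twoPoint_linearization_error (d : ℕ)
    (X : Set (EuclideanSpace ℝ (Fin d))) (hXc : IsCompact X) (hXconv : Convex ℝ X)
    (h : EuclideanSpace ℝ (Fin d) → ℝ) (L : ℝ) (hSm : IsSmoothOn h L X)
    (x : EuclideanSpace ℝ (Fin d)) (hx : x ∈ X) (r : ℝ) (hr0 : 0 < r) :
    (∫ z, ‖((h (x + r • z) - h x) / r) • z - (inner ℝ (gradient h x) z : ℝ) • z‖ ^ 2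
        ∂(zDist X x r)) ≤
      r ^ 2 * L ^ 2 * ((d : ℝ) + 6) ^ 3 / 4 := by
  set S := sShift X x r
  have hS0 : (0 : EuclideanSpace ℝ (Fin d)) ∈ S := zero_mem_sShift hx
  have hSc : IsCompact S := hXc.sShift
  have hSconv : Convex ℝ S := hXconv.sShift hr0.ne'
  have hbound (z : EuclideanSpace ℝ (Fin d)) :
      ‖((h (x + r • metricProj S z) - h x) / r) • metricProj S z
          - ⟪gradient h x, metricProj S z⟫ • metricProj S z‖ ^ 2
        ≤ r ^ 2 * L ^ 2 / 4 * ‖z‖ ^ 6 := by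
    have hz : x + r • metricProj S z ∈ X :=
      (sShift_eq_preimage hr0.ne').subset (metricProj_mem_and_dist_le ⟨0, hS0⟩ hSc z).1
    have hseg := hXconv.segment_subset hx hz
    refine (sq_norm_twoPoint_sub_inner_smul_le hr0.ne' (fun y _ => hSm.1 y)
      (fun y hy => hSm.2 y (hseg hy) x hx)).trans ?_
    gcongr
    exact norm_metricProj_le hS0 hSc hSconv z
  have hcont := hSm.1.continuous
  rw [zDist, integral_map (lipschitzWith_one_metricProj ⟨0, hS0⟩ hSc hSconv).continuous.aemeasurable
    (by fun_prop)]
  calc _ ≤ ∫ z, r ^ 2 * L ^ 2 / 4 * ‖z‖ ^ 6 ∂stdGaussian d :=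
        integral_mono_of_nonneg (ae_of_all _ fun _ => by positivity)
          ((integrable_norm_pow_stdGaussian d 6).const_mul _) (ae_of_all _ hbound)
    _ = r ^ 2 * L ^ 2 / 4 * (d * (d + 2) * (d + 4)) := by
        rw [integral_const_mul, integral_norm_pow_six_stdGaussian]
    _ ≤ r ^ 2 * L ^ 2 / 4 * ((d + 6) * (d + 6) * (d + 6)) := by gcongr <;> linarith
    _ = r ^ 2 * L ^ 2 * ((d : ℝ) + 6) ^ 3 / 4 := by ring

end
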